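/- For every clutter M = (E, 𝒜) and every v ∈ E, b(M / v) = b(M) \ v. -/

import Mathlib

open Set

/-- A clutter: a finite ground set together with an antichain of subsets (rows). -/
structure Clutter (α : Type*) where
  E : Set α
  E_finite : E.Finite
  rows : Set (Set α)
  rows_subset : ∀ A ∈ rows, A ⊆ E
  antichain : ∀ A ∈ rows, ∀ B ∈ rows, A ⊆ B → A = B

variable {α : Type*}

/-- Deletion of an element of a clutter. -/
def Clutter.delete (M : Clutter α) (v : α) : Clutter α where
  E := M.E \ {v}
  E_finite := M.E_finite.sdiff
  rows := {A | A ∈ M.rows ∧ v ∉ A}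
  rows_subset := fun A hA => subset_diff_singleton (M.rows_subset A hA.1) hA.2
  antichain := fun A hA B hB h => M.antichain A hA.1 B hB.1 h

/-- Contraction of an element of a clutter. -/
def Clutter.contract (M : Clutter α) (v : α) : Clutter α where
  E := M.E \ {v}
  E_finite := M.E_finite.sdiff
  rows := {A | A ∈ (fun B => B \ {v}) '' M.rows ∧
    ∀ B ∈ (fun B => B \ {v}) '' M.rows, B ⊆ A → B = A}
  rows_subset := by
    rintro A ⟨⟨B, hB, rfl⟩, -⟩
    exact diff_subset_diff_left (M.rows_subset B hB)
  antichain := fun A hA B hB hAB => hB.2 A hA.1 hAB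

/-- A separation of a clutter: a partition of the ground set into two non-empty
parts such that every row lies in one of the parts. -/
def Clutter.IsSeparation (M : Clutter α) (X Y : Set α) : Prop :=
  X.Nonempty ∧ Y.Nonempty ∧ Disjoint X Y ∧ X ∪ Y = M.E ∧
    ∀ A ∈ M.rows, A ⊆ X ∨ A ⊆ Y

/-- A clutter is connected if it admits no separation. -/
def Clutter.Connected (M : Clutter α) : Prop := ¬ ∃ X Y, M.IsSeparation X Y
/-- A transversal (blocking set): a subset of the ground set meeting every row. -/
def Clutter.IsTransversal (M : Clutter α) (B : Set α) : Prop :=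
  B ⊆ M.E ∧ ∀ A ∈ M.rows, (B ∩ A).Nonempty

/-- The blocker of a clutter: rows are the inclusion-minimal transversals. -/
def Clutter.blocker (M : Clutter α) : Clutter α where
  E := M.E
  E_finite := M.E_finite
  rows := {B | M.IsTransversal B ∧ ∀ C, M.IsTransversal C → C ⊆ B → C = B}
  rows_subset := fun B hB => hB.1.1
  antichain := fun A hA B hB h => hB.2 A hA.1 h

/- A transversal of `M / v` is the same as a transversal of `M` avoiding `v`: every row of
`M / v` is some `A - v`, and every `A - v` contains a row of `M / v` (finiteness gives a minimal
one). Since avoiding `v` is inherited by subsets, the minimal transversals of `M / v` are exactly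
the minimal transversals of `M` that avoid `v`, i.e. the rows of `b(M) \ v`. -/

theorem minimal_and_iff_of_isLowerSet {β : Type*} [LE β] {P Q : β → Prop} {x : β}
    (hQ : IsLowerSet {y | Q y}) :
    Minimal (fun y ↦ P y ∧ Q y) x ↔ Minimal P x ∧ Q x :=
  ⟨fun h ↦ ⟨⟨h.prop.1, fun _ hy hyx ↦ h.2 ⟨hy, hQ hyx h.prop.2⟩ hyx⟩, h.prop.2⟩,
    fun h ↦ h.1.and_right h.2⟩

namespace Clutter

variable {M N : Clutter α} {v : α} {A B : Set α}

@[ext]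
theorem ext (hE : M.E = N.E) (hrows : M.rows = N.rows) : M = N := by
  cases M; cases N; cases hE; cases hrows; rfl

theorem mem_blocker_rows_iff : B ∈ M.blocker.rows ↔ Minimal M.IsTransversal B :=
  ⟨fun h ↦ ⟨h.1, fun _ hC hCB ↦ (h.2 _ hC hCB).ge⟩,
    fun h ↦ ⟨h.1, fun _ hC hCB ↦ h.eq_of_le hC hCB⟩⟩

theorem mem_contract_rows_iff :
    A ∈ (M.contract v).rows ↔ Minimal (· ∈ (· \ {v}) '' M.rows) A :=
  ⟨fun h ↦ ⟨h.1, fun _ hB hBA ↦ (h.2 _ hB hBA).ge⟩,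
    fun h ↦ ⟨h.1, fun _ hB hBA ↦ h.eq_of_le hB hBA⟩⟩

theorem exists_contract_row_subset (hA : A ∈ M.rows) :
    ∃ C ∈ (M.contract v).rows, C ⊆ A \ {v} := by
  have hfin : ((· \ {v}) '' M.rows).Finite :=
    (M.E_finite.finite_subsets.subset M.rows_subset).image _
  obtain ⟨C, hCA, hC⟩ := hfin.exists_le_minimal (mem_image_of_mem _ hA)
  exact ⟨C, mem_contract_rows_iff.2 hC, hCA⟩

theorem isTransversal_contract_iff :
    (M.contract v).IsTransversal B ↔ M.IsTransversal B ∧ v ∉ B := by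
  constructor
  · rintro ⟨hBE, hmeet⟩
    have hvB : v ∉ B := fun h ↦ (hBE h).2 rfl
    refine ⟨⟨hBE.trans sdiff_subset, fun A hA ↦ ?_⟩, hvB⟩
    obtain ⟨C, hC, hCA⟩ := exists_contract_row_subset (v := v) hA
    obtain ⟨x, hxB, hxC⟩ := hmeet C hC
    exact ⟨x, hxB, (hCA hxC).1⟩
  · rintro ⟨⟨hBE, hmeet⟩, hvB⟩
    refine ⟨subset_sdiff_singleton hBE hvB, ?_⟩
    rintro _ ⟨⟨A, hA, rfl⟩, -⟩
    obtain ⟨x, hxB, hxA⟩ := hmeet A hA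
    exact ⟨x, hxB, hxA, fun hxv ↦ hvB (hxv ▸ hxB)⟩

end Clutter

theorem blocker_contract_general (M : Clutter α) (v : α) :
    (M.contract v).blocker = M.blocker.delete v := by
  ext1
  · rfl
  ext B
  have htrans : (M.contract v).IsTransversal = fun C ↦ M.IsTransversal C ∧ v ∉ C :=
    funext fun _ ↦ propext Clutter.isTransversal_contract_iff
  change B ∈ (M.contract v).blocker.rows ↔ B ∈ M.blocker.rows ∧ v ∉ B
  rw [Clutter.mem_blocker_rows_iff, Clutter.mem_blocker_rows_iff, htrans]
  exact minimal_and_iff_of_isLowerSet fun _ _ hCD hv hvC ↦ hv (hCD hvC)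

theorem blocker_contract (M : Clutter α) (v : α) (hv : v ∈ M.E) :
    (M.contract v).blocker = M.blocker.delete v :=
  blocker_contract_general M v
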